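/- Let V_1, V_2, V_3, V_4 be four points in ℝ² such that the diagonal vectors V_3 − V_1 and V_4 − V_2 are linearly independent, and let μ_1 = (V_1+V_2)/2, μ_2 = (V_2+V_3)/2, μ_3 = (V_3+V_4)/2, μ_4 = (V_4+V_1)/2 be the midpoints of the edges V_1V_2, V_2V_3, V_3V_4, V_4V_1. If real numbers u_1, u_2, u_3, u_4 satisfy u_1 + u_3 = u_2 + u_4, then there exists a unique affine function u : ℝ² → ℝ such that u(μ_i) = u_i for i = 1, 2, 3, 4. -/
import Mathlib


/-- An affine (P₁) function on `ℝ²`. -/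
def IsAffine (u : (Fin 2 → ℝ) → ℝ) : Prop :=
  ∃ (ℓ : (Fin 2 → ℝ) →ₗ[ℝ] ℝ) (b : ℝ), ∀ x, u x = ℓ x + b

/-- Park–Sheen lemma, converse direction: if the diagonal vectors
`V₃ - V₁` and `V₄ - V₂` of the quadrilateral are linearly independent and the
values `u₁, u₂, u₃, u₄` satisfy `u₁ + u₃ = u₂ + u₄`, then there is a unique
affine function on `ℝ²` taking the value `uᵢ` at the edge midpoint `μᵢ`. -/
theorem stmt_8 (V₁ V₂ V₃ V₄ : Fin 2 → ℝ)
    (hdiag : LinearIndependent ℝ ![V₃ - V₁, V₄ - V₂])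
    (μ₁ μ₂ μ₃ μ₄ : Fin 2 → ℝ)
    (hμ₁ : μ₁ = (1 / 2 : ℝ) • (V₁ + V₂)) (hμ₂ : μ₂ = (1 / 2 : ℝ) • (V₂ + V₃))
    (hμ₃ : μ₃ = (1 / 2 : ℝ) • (V₃ + V₄)) (hμ₄ : μ₄ = (1 / 2 : ℝ) • (V₄ + V₁))
    (u₁ u₂ u₃ u₄ : ℝ) (hcon : u₁ + u₃ = u₂ + u₄) :
    ∃! u : (Fin 2 → ℝ) → ℝ,
      IsAffine u ∧ u μ₁ = u₁ ∧ u μ₂ = u₂ ∧ u μ₃ = u₃ ∧ u μ₄ = u₄ := by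
  have hfr : Fintype.card (Fin 2) = Module.finrank ℝ (Fin 2 → ℝ) := by simp
  let B := basisOfLinearIndependentOfCardEqFinrank hdiag hfr
  have hB0 : B 0 = V₃ - V₁ := by
    simp [B, coe_basisOfLinearIndependentOfCardEqFinrank]
  have hB1 : B 1 = V₄ - V₂ := by
    simp [B, coe_basisOfLinearIndependentOfCardEqFinrank]
  set ℓ : (Fin 2 → ℝ) →ₗ[ℝ] ℝ := B.constr ℝ ![2 * (u₂ - u₁), 2 * (u₃ - u₂)] with hℓdef
  have hℓ0 : ℓ (V₃ - V₁) = 2 * (u₂ - u₁) := by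
    rw [← hB0]; simp [hℓdef, Module.Basis.constr_basis]
  have hℓ1 : ℓ (V₄ - V₂) = 2 * (u₃ - u₂) := by
    rw [← hB1]; simp [hℓdef, Module.Basis.constr_basis]
  have hd1 : μ₂ - μ₁ = (1 / 2 : ℝ) • (V₃ - V₁) := by
    rw [hμ₁, hμ₂]; module
  have hd2 : μ₃ - μ₂ = (1 / 2 : ℝ) • (V₄ - V₂) := by
    rw [hμ₂, hμ₃]; module
  have hpar : μ₄ = μ₁ + μ₃ - μ₂ := by
    rw [hμ₁, hμ₂, hμ₃, hμ₄]; module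
  have h21 : ℓ μ₂ - ℓ μ₁ = u₂ - u₁ := by
    rw [← map_sub, hd1, map_smul, hℓ0]; simp
  have h32 : ℓ μ₃ - ℓ μ₂ = u₃ - u₂ := by
    rw [← map_sub, hd2, map_smul, hℓ1]; simp
  have h4 : ℓ μ₄ = ℓ μ₁ + ℓ μ₃ - ℓ μ₂ := by
    rw [hpar, map_sub, map_add]
  set b : ℝ := u₁ - ℓ μ₁ with hbdef
  refine ⟨fun x => ℓ x + b, ⟨⟨ℓ, b, fun _ => rfl⟩, by simp [hbdef],
    by simp [hbdef]; linarith, by simp [hbdef]; linarith, by simp [hbdef, h4]; linarith⟩, ?_⟩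
  rintro w ⟨⟨ℓ', b', hw⟩, h1, h2, h3, h4'⟩
  have e1 : ℓ' μ₁ + b' = u₁ := by rw [← hw μ₁]; exact h1
  have e2 : ℓ' μ₂ + b' = u₂ := by rw [← hw μ₂]; exact h2
  have e3 : ℓ' μ₃ + b' = u₃ := by rw [← hw μ₃]; exact h3
  have hℓ'0 : ℓ' (V₃ - V₁) = 2 * (u₂ - u₁) := by
    have h : ℓ' (μ₂ - μ₁) = u₂ - u₁ := by rw [map_sub]; linarith
    rw [hd1, map_smul] at h
    simp at h
    rw [map_sub]; linarith
  have hℓ'1 : ℓ' (V₄ - V₂) = 2 * (u₃ - u₂) := by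
    have h : ℓ' (μ₃ - μ₂) = u₃ - u₂ := by rw [map_sub]; linarith
    rw [hd2, map_smul] at h
    simp at h
    rw [map_sub]; linarith
  have hℓeq : ℓ' = ℓ := by
    apply B.ext
    intro i
    fin_cases i
    · show ℓ' (B 0) = ℓ (B 0)
      rw [hB0, hℓ0, hℓ'0]
    · show ℓ' (B 1) = ℓ (B 1)
      rw [hB1, hℓ1, hℓ'1]
  have hbeq : b' = b := by
    have := hw μ₁
    rw [hℓeq] at this
    rw [hbdef, ← h1, this]; ring
  funext x
  rw [hw x, hℓeq, hbeq]
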